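/- arXiv:2411.09532 — 5 statements merged into one kernel-verified Lean document; each statement's English description precedes it below -/
import Mathlib

section
/- Let Z be a Zinbiel algebra over a field K which is the internal direct sum Z = Z₁ ⊕ Z₂ of two ideals Z₁ and Z₂. Then the quasi-centroid decomposes as a direct sum of subspaces QΓ(Z) = Q₁ ⊕ Q₂ ⊕ C₁ ⊕ C₂, where Qᵢ is the set of φ ∈ QΓ(Z) with φ(Zᵢ) ⊆ Zᵢ and φ vanishing on the complementary ideal, and, for i ≠ j, Cᵢ is the set of linear maps φ : Z → Z vanishing on Z_j with φ(Zᵢ) ⊆ C(Z_j). That is, every element of QΓ(Z) is uniquely a sum φ₁ + φ₂ + ψ₁ + ψ₂ with φᵢ ∈ Qᵢ and ψᵢ ∈ Cᵢ, and each such sum lies in QΓ(Z). -/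
/-!
Write `π₁, π₂` for the projections of `Z = Z₁ ⊕ Z₂` onto its summands. Since `Z₁ · Z₂` and
`Z₂ · Z₁` lie in `Z₁ ∩ Z₂ = 0`, the ideals annihilate each other, and the quasi-centroid identity
`φ(p)·q = p·φ(q)` can be tested blockwise. The diagonal blocks `πᵢ φ πᵢ` are again in the
quasi-centroid, while for `x ∈ Zᵢ` and `q ∈ Zⱼ` the products `πⱼ(φ x)·q = x·φ(q)` and
`q·πⱼ(φ x) = φ(q)·x` lie in both ideals, so the off-diagonal blocks take values in the center of
`Zⱼ`, which is central in all of `Z`. Uniqueness holds because each block of a decomposition is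
read off from `φ` by the projections.
-/

open Submodule

section

variable {R M : Type*} [CommRing R] [AddCommGroup M] [Module R M] (mul : M →ₗ[R] M →ₗ[R] M)

def quasiCentroid : Submodule R (Module.End R M) where
  carrier := {φ | ∀ p q, mul (φ p) q = mul p (φ q)}
  add_mem' {φ ψ} hφ hψ p q := by simp only [LinearMap.add_apply, map_add, hφ p q, hψ p q]
  zero_mem' p q := by simp only [LinearMap.zero_apply, map_zero]
  smul_mem' c φ hφ p q := by simp only [LinearMap.smul_apply, map_smul, hφ p q]

def IsBilinIdeal (I : Submodule R M) : Prop :=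
  ∀ p r, r ∈ I → mul p r ∈ I ∧ mul r p ∈ I

def centerIn (J : Submodule R M) : Set M :=
  {z | z ∈ J ∧ ∀ q ∈ J, mul z q = 0 ∧ mul q z = 0}

/-- The block `Qᵢ` of the quasi-centroid for `I = Zᵢ`, `J = Zⱼ`. -/
def quasiCentroidBlock (I J : Submodule R M) : Set (Module.End R M) :=
  {φ | φ ∈ quasiCentroid mul ∧ (∀ x ∈ I, φ x ∈ I) ∧ ∀ x ∈ J, φ x = 0}

/-- The block `Cᵢ` for `I = Zᵢ`, `J = Zⱼ`. -/
def centralCrossMaps (I J : Submodule R M) : Set (Module.End R M) :=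
  {φ | (∀ x ∈ J, φ x = 0) ∧ ∀ x ∈ I, φ x ∈ centerIn mul J}

variable {mul} {I J : Submodule R M}

theorem mul_eq_zero_of_mem_of_mem (hI : IsBilinIdeal mul I) (hJ : IsBilinIdeal mul J)
    (hd : Disjoint I J) {x y : M} (hx : x ∈ I) (hy : y ∈ J) : mul x y = 0 :=
  disjoint_def.1 hd _ (hI y x hx).2 (hJ x y hy).1

section Projection

variable (hI : IsBilinIdeal mul I) (hJ : IsBilinIdeal mul J) (h : IsCompl I J)
include hI hJ h

theorem mul_projection_left_of_mem {q : M} (hq : q ∈ I) (z : M) :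
    mul (I.projection J h z) q = mul z q := by
  conv_rhs => rw [← projection_add_projection_eq_self h z]
  rw [map_add, LinearMap.add_apply,
    mul_eq_zero_of_mem_of_mem hJ hI h.disjoint.symm (projection_apply_mem _ z) hq, add_zero]

theorem mul_projection_right_of_mem {q : M} (hq : q ∈ I) (z : M) :
    mul q (I.projection J h z) = mul q z := by
  conv_rhs => rw [← projection_add_projection_eq_self h z]
  rw [map_add,
    mul_eq_zero_of_mem_of_mem hI hJ h.disjoint hq (projection_apply_mem _ z), add_zero]

theorem mem_centerIn_top_of_mem_centerIn {z : M} (hz : z ∈ centerIn mul J) :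
    z ∈ centerIn mul ⊤ := by
  refine ⟨mem_top, fun q _ => ?_⟩
  rw [← mul_projection_right_of_mem hJ hI h.symm hz.1,
    ← mul_projection_left_of_mem hJ hI h.symm hz.1]
  exact hz.2 _ (projection_apply_mem _ q)

theorem centralCrossMaps_subset_quasiCentroid :
    centralCrossMaps mul I J ⊆ quasiCentroid mul := by
  rintro ψ ⟨hψJ, hψI⟩ p q
  have hcenter : ∀ x, ψ x ∈ centerIn mul ⊤ := fun x => by
    rw [← projection_add_projection_eq_self h x, map_add, hψJ _ (projection_apply_mem _ x),
      add_zero]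
    exact mem_centerIn_top_of_mem_centerIn hI hJ h (hψI _ (projection_apply_mem _ x))
  rw [((hcenter p).2 q mem_top).1, ((hcenter q).2 p mem_top).2]

theorem projection_comp_comp_projection_mem_quasiCentroidBlock {φ : Module.End R M}
    (hφ : φ ∈ quasiCentroid mul) :
    I.projection J h ∘ₗ φ ∘ₗ I.projection J h ∈ quasiCentroidBlock mul I J := by
  set π := I.projection J h
  have hπ : ∀ x, π x ∈ I := projection_apply_mem h
  refine ⟨fun p q => ?_, fun x _ => hπ _, fun x hx => ?_⟩
  · simp only [LinearMap.comp_apply]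
    calc mul (π (φ (π p))) q
        = mul (π (φ (π p))) (π q) := (mul_projection_right_of_mem hI hJ h (hπ _) q).symm
      _ = mul (φ (π p)) (π q) := mul_projection_left_of_mem hI hJ h (hπ q) _
      _ = mul (π p) (φ (π q)) := hφ _ _
      _ = mul (π p) (π (φ (π q))) := (mul_projection_right_of_mem hI hJ h (hπ p) _).symm
      _ = mul p (π (φ (π q))) := mul_projection_left_of_mem hI hJ h (hπ _) p
  · simp [π, projection_apply_of_mem_right h hx]

theorem projection_comp_comp_projection_mem_centralCrossMaps {φ : Module.End R M}
    (hφ : φ ∈ quasiCentroid mul) :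
    J.projection I h.symm ∘ₗ φ ∘ₗ I.projection J h ∈ centralCrossMaps mul I J := by
  refine ⟨fun x hx => by simp [projection_apply_of_mem_right h hx], fun x hx => ?_⟩
  simp only [LinearMap.comp_apply, projection_apply_of_mem_left h hx]
  refine ⟨projection_apply_mem _ _, fun q hq => ⟨?_, ?_⟩⟩
  · -- `πⱼ(φ x) · q = φ x · q = x · φ q` lies in `J` and in `I`
    refine disjoint_def.1 h.disjoint _ ?_ (hJ _ q hq).1
    rw [mul_projection_left_of_mem hJ hI h.symm hq, hφ]
    exact (hI _ x hx).2
  · refine disjoint_def.1 h.disjoint _ ?_ (hJ _ q hq).2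
    rw [mul_projection_right_of_mem hJ hI h.symm hq, ← hφ]
    exact (hI _ x hx).1

end Projection

theorem eq_sum_projection_comp_comp_projection (h : IsCompl I J) (φ : Module.End R M) :
    φ = I.projection J h ∘ₗ φ ∘ₗ I.projection J h +
      J.projection I h.symm ∘ₗ φ ∘ₗ J.projection I h.symm +
      J.projection I h.symm ∘ₗ φ ∘ₗ I.projection J h +
      I.projection J h ∘ₗ φ ∘ₗ J.projection I h.symm := by
  conv_lhs => rw [← LinearMap.id_comp φ, ← φ.comp_id, ← projection_add_projection_eq_id h]
  simp only [LinearMap.add_comp, LinearMap.comp_add]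
  abel

theorem eq_projection_comp_comp_projection {K L : Submodule R M} (h : IsCompl I J)
    (hKL : IsCompl K L) {f g : Module.End R M} (hfJ : ∀ x ∈ J, f x = 0)
    (hfI : ∀ x ∈ I, f x ∈ K) (hgf : ∀ x ∈ I, g x - f x ∈ L) :
    f = K.projection L hKL ∘ₗ g ∘ₗ I.projection J h := by
  refine LinearMap.ext_on_codisjoint h.codisjoint (fun x hx => ?_) (fun x hx => ?_)
  · have hg : g x = f x + (g x - f x) := (add_sub_cancel _ _).symm
    simp only [LinearMap.comp_apply, projection_apply_of_mem_left h hx]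
    rw [hg, map_add, projection_apply_of_mem_left hKL (hfI x hx),
      projection_apply_of_mem_right hKL (hgf x hx), add_zero]
  · simp [hfJ x hx, projection_apply_of_mem_right h hx]

theorem eq_projection_comp_comp_projection_of_mem (h : IsCompl I J) {φ a c : Module.End R M}
    (ha : a ∈ quasiCentroidBlock mul I J) (hc : c ∈ centralCrossMaps mul I J)
    (hφ : ∀ x ∈ I, φ x = a x + c x) :
    a = I.projection J h ∘ₗ φ ∘ₗ I.projection J h ∧
      c = J.projection I h.symm ∘ₗ φ ∘ₗ I.projection J h :=
  ⟨eq_projection_comp_comp_projection h h ha.2.2 ha.2.1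
      fun x hx => by simpa [hφ x hx] using (hc.2 x hx).1,
    eq_projection_comp_comp_projection h h.symm hc.1 (fun x hx => (hc.2 x hx).1)
      fun x hx => by simpa [hφ x hx] using ha.2.1 x hx⟩

end

theorem quasiCentroid_direct_sum_decomposition_general {K Z : Type*} [Field K] [AddCommGroup Z]
    [Module K Z] (mul : Z →ₗ[K] Z →ₗ[K] Z)
    (Z₁ Z₂ : Submodule K Z)
    (hI₁ : ∀ p r : Z, r ∈ Z₁ → mul p r ∈ Z₁ ∧ mul r p ∈ Z₁)
    (hI₂ : ∀ p r : Z, r ∈ Z₂ → mul p r ∈ Z₂ ∧ mul r p ∈ Z₂)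
    (hmeet : Z₁ ⊓ Z₂ = ⊥) (hjoin : Z₁ ⊔ Z₂ = ⊤) :
    let QC : Set (Module.End K Z) := {φ | ∀ p q : Z, mul (φ p) q = mul p (φ q)}
    let Q₁ : Set (Module.End K Z) :=
      {φ | φ ∈ QC ∧ (∀ x ∈ Z₁, φ x ∈ Z₁) ∧ (∀ x ∈ Z₂, φ x = 0)}
    let Q₂ : Set (Module.End K Z) :=
      {φ | φ ∈ QC ∧ (∀ x ∈ Z₂, φ x ∈ Z₂) ∧ (∀ x ∈ Z₁, φ x = 0)}
    let C₁ : Set (Module.End K Z) :=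
      {φ | (∀ x ∈ Z₂, φ x = 0) ∧
        ∀ x ∈ Z₁, φ x ∈ Z₂ ∧ ∀ q ∈ Z₂, mul (φ x) q = 0 ∧ mul q (φ x) = 0}
    let C₂ : Set (Module.End K Z) :=
      {φ | (∀ x ∈ Z₁, φ x = 0) ∧
        ∀ x ∈ Z₂, φ x ∈ Z₁ ∧ ∀ q ∈ Z₁, mul (φ x) q = 0 ∧ mul q (φ x) = 0}
    (∀ φ₁ ∈ Q₁, ∀ φ₂ ∈ Q₂, ∀ ψ₁ ∈ C₁, ∀ ψ₂ ∈ C₂, φ₁ + φ₂ + ψ₁ + ψ₂ ∈ QC) ∧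
    ∀ φ ∈ QC, ∃! t : Module.End K Z × Module.End K Z × Module.End K Z × Module.End K Z,
      t.1 ∈ Q₁ ∧ t.2.1 ∈ Q₂ ∧ t.2.2.1 ∈ C₁ ∧ t.2.2.2 ∈ C₂ ∧
      φ = t.1 + t.2.1 + t.2.2.1 + t.2.2.2 := by
  intro QC Q₁ Q₂ C₁ C₂
  have h : IsCompl Z₁ Z₂ := ⟨disjoint_iff.2 hmeet, codisjoint_iff.2 hjoin⟩
  refine ⟨fun φ₁ hφ₁ φ₂ hφ₂ ψ₁ hψ₁ ψ₂ hψ₂ => ?_, fun φ hφ => ?_⟩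
  · exact add_mem (add_mem (add_mem hφ₁.1 hφ₂.1)
      (centralCrossMaps_subset_quasiCentroid hI₁ hI₂ h hψ₁))
      (centralCrossMaps_subset_quasiCentroid hI₂ hI₁ h.symm hψ₂)
  set π₁ := Z₁.projection Z₂ h
  set π₂ := Z₂.projection Z₁ h.symm
  refine ⟨(π₁ ∘ₗ φ ∘ₗ π₁, π₂ ∘ₗ φ ∘ₗ π₂, π₂ ∘ₗ φ ∘ₗ π₁, π₁ ∘ₗ φ ∘ₗ π₂),
    ⟨projection_comp_comp_projection_mem_quasiCentroidBlock hI₁ hI₂ h hφ,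
    projection_comp_comp_projection_mem_quasiCentroidBlock hI₂ hI₁ h.symm hφ,
    projection_comp_comp_projection_mem_centralCrossMaps hI₁ hI₂ h hφ,
    projection_comp_comp_projection_mem_centralCrossMaps hI₂ hI₁ h.symm hφ,
    eq_sum_projection_comp_comp_projection h φ⟩, ?_⟩
  rintro ⟨a, b, c, d⟩ ⟨ha, hb, hc, hd, he⟩
  obtain ⟨ea, ec⟩ := eq_projection_comp_comp_projection_of_mem (φ := φ) h ha hc
    fun x hx => by simp [he, hb.2.2 x hx, hd.1 x hx]
  obtain ⟨eb, ed⟩ := eq_projection_comp_comp_projection_of_mem (φ := φ) h.symm hb hd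
    fun x hx => by simp [he, ha.2.2 x hx, hc.1 x hx, add_comm]
  exact Prod.ext ea (Prod.ext eb (Prod.ext ec ed))

/-- If a Zinbiel algebra `Z` is the internal direct sum of two ideals `Z₁` and `Z₂`,
then its quasi-centroid decomposes as `QΓ(Z) = Q₁ ⊕ Q₂ ⊕ C₁ ⊕ C₂`:
every element of `QΓ(Z)` is uniquely the sum of elements of `Q₁, Q₂, C₁, C₂`,
and every such sum belongs to `QΓ(Z)`. Here `Qᵢ` consists of the elements of the
quasi-centroid preserving `Zᵢ` and vanishing on the complementary ideal, and `Cᵢ`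
consists of the linear maps vanishing on `Z_j` and sending `Zᵢ` into the center of
`Z_j` (for `i ≠ j`). -/
theorem quasiCentroid_direct_sum_decomposition {K Z : Type*} [Field K] [AddCommGroup Z]
    [Module K Z] (mul : Z →ₗ[K] Z →ₗ[K] Z)
    (hZinbiel : ∀ p q r : Z, mul (mul p q) r = mul p (mul q r) + mul p (mul r q))
    (Z₁ Z₂ : Submodule K Z)
    (hI₁ : ∀ p r : Z, r ∈ Z₁ → mul p r ∈ Z₁ ∧ mul r p ∈ Z₁)
    (hI₂ : ∀ p r : Z, r ∈ Z₂ → mul p r ∈ Z₂ ∧ mul r p ∈ Z₂)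
    (hmeet : Z₁ ⊓ Z₂ = ⊥) (hjoin : Z₁ ⊔ Z₂ = ⊤) :
    let QC : Set (Module.End K Z) := {φ | ∀ p q : Z, mul (φ p) q = mul p (φ q)}
    let Q₁ : Set (Module.End K Z) :=
      {φ | φ ∈ QC ∧ (∀ x ∈ Z₁, φ x ∈ Z₁) ∧ (∀ x ∈ Z₂, φ x = 0)}
    let Q₂ : Set (Module.End K Z) :=
      {φ | φ ∈ QC ∧ (∀ x ∈ Z₂, φ x ∈ Z₂) ∧ (∀ x ∈ Z₁, φ x = 0)}
    let C₁ : Set (Module.End K Z) :=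
      {φ | (∀ x ∈ Z₂, φ x = 0) ∧
        ∀ x ∈ Z₁, φ x ∈ Z₂ ∧ ∀ q ∈ Z₂, mul (φ x) q = 0 ∧ mul q (φ x) = 0}
    let C₂ : Set (Module.End K Z) :=
      {φ | (∀ x ∈ Z₁, φ x = 0) ∧
        ∀ x ∈ Z₂, φ x ∈ Z₁ ∧ ∀ q ∈ Z₁, mul (φ x) q = 0 ∧ mul q (φ x) = 0}
    (∀ φ₁ ∈ Q₁, ∀ φ₂ ∈ Q₂, ∀ ψ₁ ∈ C₁, ∀ ψ₂ ∈ C₂, φ₁ + φ₂ + ψ₁ + ψ₂ ∈ QC) ∧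
    ∀ φ ∈ QC, ∃! t : Module.End K Z × Module.End K Z × Module.End K Z × Module.End K Z,
      t.1 ∈ Q₁ ∧ t.2.1 ∈ Q₂ ∧ t.2.2.1 ∈ C₁ ∧ t.2.2.2 ∈ C₂ ∧
      φ = t.1 + t.2.1 + t.2.2.1 + t.2.2.2 :=
  quasiCentroid_direct_sum_decomposition_general mul Z₁ Z₂ hI₁ hI₂ hmeet hjoin
end

section
/- Every 2-dimensional Zinbiel algebra Z over the complex numbers whose multiplication is not identically zero admits a basis (e₁, e₂) in which the multiplication is given by e₁·e₁ = e₂ and all other products of basis elements are zero; equivalently, Z is isomorphic to the algebra Z₂¹. -/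
/-- The multiplication of the 2-dimensional complex Zinbiel algebra `Z₂¹`:
`e₁·e₁ = e₂`, all other products of basis elements zero. -/
def mulZ21 (p q : Fin 2 → ℂ) : Fin 2 → ℂ := ![0, p 0 * q 0]

/-!
If all squares vanish, the product is alternating, and the Zinbiel identity then gives
`(p·q)·r = p·(q·r) - p·(q·r) = 0`. In dimension two `p·q` lies in the span of `p` and `q`, and
this forces `p·q = 0`; so a nonzero product yields some `a` with `b := a·a ≠ 0`. The identity at
`(a, a, a)` gives `b·a = 2 a·b`, and comparing `a·v` with `v·a` for `v = s a + t b` shows that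
`a, b` are independent, hence a basis. Writing `a·b = α a + β b`, the identity at `(a, b, a)`
reads `(a·b)·a = 3 a·(a·b)`, i.e. `α β = 0` and `2 α + β² = 0`, so `a·b = 0`; then `b·a = 0`
and `b·b = a·(a·b) + a·(b·a) = 0`.
-/

def IsZinbiel {R M : Type*} [CommSemiring R] [AddCommMonoid M] [Module R M]
    (mul : M →ₗ[R] M →ₗ[R] M) : Prop :=
  ∀ p q r, mul (mul p q) r = mul p (mul q r) + mul p (mul r q)

open Submodule

theorem LinearMap.IsAlt.linearIndependent_pair {K M : Type*} [Field K] [AddCommGroup M]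
    [Module K M] {mul : M →ₗ[K] M →ₗ[K] M} (hmul : mul.IsAlt) {p q : M} (hpq : mul p q ≠ 0) :
    LinearIndependent K ![p, q] := by
  refine LinearIndependent.pair_iff.mpr fun s t hst => ⟨?_, ?_⟩
  · have h := congrArg (mul · q) hst
    simp only [map_add, map_smul, LinearMap.add_apply, LinearMap.smul_apply, hmul q,
      smul_zero, add_zero, map_zero, LinearMap.zero_apply] at h
    exact (smul_eq_zero.mp h).resolve_right hpq
  · have h := congrArg (mul p) hst
    simp only [map_add, map_smul, hmul p, smul_zero, zero_add, map_zero] at h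
    exact (smul_eq_zero.mp h).resolve_right hpq

theorem mem_span_pair_of_finrank_eq_two {K V : Type*} [Field K] [AddCommGroup V] [Module K V]
    (hdim : Module.finrank K V = 2) {p q : V} (hpq : LinearIndependent K ![p, q]) (x : V) :
    x ∈ span K {p, q} := by
  rw [← Matrix.range_cons_cons_empty p q ![],
    hpq.span_eq_top_of_card_eq_finrank (by simp [hdim])]
  trivial

namespace IsZinbiel

section CommSemiring

variable {R M : Type*} [CommSemiring R] [AddCommGroup M] [Module R M] {mul : M →ₗ[R] M →ₗ[R] M}

theorem apply_apply_eq_zero_of_isAlt (h : IsZinbiel mul) (hmul : mul.IsAlt) (p q r : M) :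
    mul (mul p q) r = 0 := by
  rw [h, ← hmul.neg r q, map_neg, neg_add_cancel]

end CommSemiring

section Field

variable {K M : Type*} [Field K] [AddCommGroup M] [Module K M] {mul : M →ₗ[K] M →ₗ[K] M}

theorem apply_eq_zero_of_isAlt_of_mem_span (h : IsZinbiel mul) (hmul : mul.IsAlt) {p q : M}
    (hspan : mul p q ∈ span K {p, q}) : mul p q = 0 := by
  obtain ⟨s, t, hst⟩ := mem_span_pair.mp hspan
  by_contra hpq
  have hs : s • mul p q = 0 := by
    have hq := h.apply_apply_eq_zero_of_isAlt hmul p q q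
    rw [← hst] at hq
    simpa only [map_add, map_smul, LinearMap.add_apply, LinearMap.smul_apply, hmul q,
      smul_zero, add_zero] using hq
  have ht : t • mul q p = 0 := by
    have hp := h.apply_apply_eq_zero_of_isAlt hmul p q p
    rw [← hst] at hp
    simpa only [map_add, map_smul, LinearMap.add_apply, LinearMap.smul_apply, hmul p,
      smul_zero, zero_add] using hp
  rw [← hmul.neg, smul_neg, neg_eq_zero] at ht
  apply hpq
  rw [← hst, (smul_eq_zero.mp hs).resolve_right hpq, (smul_eq_zero.mp ht).resolve_right hpq,
    zero_smul, zero_smul, add_zero]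

theorem linearIndependent_mul_self (h : IsZinbiel mul) {a : M} (ha : mul a a ≠ 0) :
    LinearIndependent K ![a, mul a a] := by
  refine LinearIndependent.pair_iff.mpr fun s t hst => ?_
  have hleft := congrArg (mul a) hst
  have hright := congrArg (mul · a) hst
  simp only [map_add, map_smul, LinearMap.add_apply, LinearMap.smul_apply, map_zero,
    LinearMap.zero_apply, h a a a] at hleft hright
  have hs : s • mul a a = 0 := by
    linear_combination (norm := module) 2 • hleft - hright
  obtain rfl : s = 0 := (smul_eq_zero.mp hs).resolve_right ha
  rw [zero_smul, zero_add] at hst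
  exact ⟨rfl, (smul_eq_zero.mp hst).resolve_right ha⟩

theorem mul_mul_self_eq_zero [NeZero (2 : K)] (h : IsZinbiel mul) {a : M}
    (hind : LinearIndependent K ![a, mul a a])
    (hspan : mul a (mul a a) ∈ span K {a, mul a a}) : mul a (mul a a) = 0 := by
  obtain ⟨α, β, hx⟩ := mem_span_pair.mp hspan
  set b := mul a a
  set x := mul a b
  have hba : mul b a = x + x := h a a a
  have hkey : mul x a = mul a x + mul a x + mul a x := by rw [h a b a, hba, map_add]
  have hxa : mul x a = α • b + β • (x + x) := by
    rw [← hba, ← hx]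
    simp only [map_add, map_smul, LinearMap.add_apply, LinearMap.smul_apply, b]
  have hax : mul a x = α • b + β • x := by
    conv_lhs => rw [← hx]
    simp only [map_add, map_smul]
    rfl
  have hcoord : (β * α) • a + (2 * α + β ^ 2) • b = 0 := by
    linear_combination (norm := module) β • hx - hkey + hxa - 3 • hax
  obtain ⟨hβα, hαβ⟩ := LinearIndependent.pair_iff.mp hind _ _ hcoord
  obtain ⟨rfl, rfl⟩ : α = 0 ∧ β = 0 := by
    rcases mul_eq_zero.mp hβα with rfl | rfl
    · simpa [two_ne_zero] using hαβ
    · simpa using hαβ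
  simpa using hx.symm

theorem exists_mul_self_ne_zero (h : IsZinbiel mul) (hdim : Module.finrank K M = 2)
    (hne : mul ≠ 0) : ∃ a, mul a a ≠ 0 := by
  by_contra! hsq
  apply hne
  ext p q
  by_contra hpq
  exact hpq (h.apply_eq_zero_of_isAlt_of_mem_span hsq
    (mem_span_pair_of_finrank_eq_two hdim (LinearMap.IsAlt.linearIndependent_pair hsq hpq) _))

end Field

end IsZinbiel

theorem Module.Basis.equivFun_mul_eq_mulZ21 {Z : Type*} [AddCommGroup Z] [Module ℂ Z]
    {mul : Z →ₗ[ℂ] Z →ₗ[ℂ] Z} (B : Module.Basis (Fin 2) ℂ Z) (h00 : mul (B 0) (B 0) = B 1)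
    (h01 : mul (B 0) (B 1) = 0) (h10 : mul (B 1) (B 0) = 0) (h11 : mul (B 1) (B 1) = 0)
    (p q : Z) : B.equivFun (mul p q) = mulZ21 (B.equivFun p) (B.equivFun q) := by
  have hrepr (z : Z) : z = B.repr z 0 • B 0 + B.repr z 1 • B 1 := by
    rw [← Fin.sum_univ_two (fun i => B.repr z i • B i), B.sum_repr]
  have hpq : mul p q = (B.repr p 0 * B.repr q 0) • B 1 := by
    conv_lhs => rw [hrepr p, hrepr q]
    simp [h00, h01, h10, h11, smul_smul]
  rw [hpq, map_smul]
  ext i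
  fin_cases i <;> simp [mulZ21]

theorem two_dim_zinbiel_classification_general {Z : Type*} [AddCommGroup Z] [Module ℂ Z]
    (hdim : Module.finrank ℂ Z = 2)
    (mul : Z →ₗ[ℂ] Z →ₗ[ℂ] Z)
    (hZinbiel : ∀ p q r : Z, mul (mul p q) r = mul p (mul q r) + mul p (mul r q))
    (hne : mul ≠ 0) :
    ∃ ψ : Z ≃ₗ[ℂ] (Fin 2 → ℂ), ∀ p q : Z, ψ (mul p q) = mulZ21 (ψ p) (ψ q) := by
  have h : IsZinbiel mul := hZinbiel
  obtain ⟨a, ha⟩ := h.exists_mul_self_ne_zero hdim hne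
  have hind := h.linearIndependent_mul_self ha
  have hab : mul a (mul a a) = 0 :=
    h.mul_mul_self_eq_zero hind (mem_span_pair_of_finrank_eq_two hdim hind _)
  have hba : mul (mul a a) a = 0 := by rw [h, hab, add_zero]
  have hbb : mul (mul a a) (mul a a) = 0 := by rw [h, hab, hba, map_zero, add_zero]
  let B := basisOfLinearIndependentOfCardEqFinrank hind (by simp [hdim])
  refine ⟨B.equivFun, B.equivFun_mul_eq_mulZ21 ?_ ?_ ?_ ?_⟩ <;> simp [B, hab, hba, hbb]

/-- Every 2-dimensional complex Zinbiel algebra whose multiplication is not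
identically zero is isomorphic to `Z₂¹`. -/
theorem two_dim_zinbiel_classification {Z : Type*} [AddCommGroup Z] [Module ℂ Z]
    [FiniteDimensional ℂ Z] (hdim : Module.finrank ℂ Z = 2)
    (mul : Z →ₗ[ℂ] Z →ₗ[ℂ] Z)
    (hZinbiel : ∀ p q r : Z, mul (mul p q) r = mul p (mul q r) + mul p (mul r q))
    (hne : mul ≠ 0) :
    ∃ ψ : Z ≃ₗ[ℂ] (Fin 2 → ℂ), ∀ p q : Z, ψ (mul p q) = mulZ21 (ψ p) (ψ q) :=
  two_dim_zinbiel_classification_general hdim mul hZinbiel hne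
end

section
/- Let Z₂¹ be the 2-dimensional complex Zinbiel algebra with basis (e₁, e₂) and e₁·e₁ = e₂ (all other products of basis elements zero). A linear map φ : Z₂¹ → Z₂¹ belongs to the centroid Γ(Z₂¹) if and only if there exist a, b ∈ ℂ with φ(e₁) = a e₁ + b e₂ and φ(e₂) = a e₂. In particular, Γ(Z₂¹) is a 2-dimensional subspace of End(Z₂¹). -/
namespace LinearMap

variable {R M : Type*} [CommSemiring R] [AddCommMonoid M] [Module R M]

def centroid (μ : M →ₗ[R] M →ₗ[R] M) : Submodule R (Module.End R M) where
  carrier := {φ | ∀ p q, φ (μ p q) = μ (φ p) q ∧ φ (μ p q) = μ p (φ q)}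
  zero_mem' := by simp
  add_mem' {φ ψ} hφ hψ p q := by
    obtain ⟨hφ₁, hφ₂⟩ := hφ p q
    obtain ⟨hψ₁, hψ₂⟩ := hψ p q
    exact ⟨by simp only [add_apply, map_add, hφ₁, hψ₁],
      by simp only [add_apply, map_add, hφ₂, hψ₂]⟩
  smul_mem' c φ hφ p q := by
    obtain ⟨hφ₁, hφ₂⟩ := hφ p q
    exact ⟨by simp only [smul_apply, map_smul, hφ₁], by simp only [smul_apply, map_smul, hφ₂]⟩

theorem one_mem_centroid (μ : M →ₗ[R] M →ₗ[R] M) : 1 ∈ μ.centroid :=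
  fun _ _ => ⟨rfl, rfl⟩

theorem ext_fin_two {f g : (Fin 2 → R) →ₗ[R] M} (h₁ : f ![1, 0] = g ![1, 0])
    (h₂ : f ![0, 1] = g ![0, 1]) : f = g := by
  refine (Pi.basisFun R (Fin 2)).ext (Fin.forall_fin_two.2 ⟨?_, ?_⟩)
  · rw [Pi.basisFun_apply]; convert h₁ using 2 <;> ext i <;> fin_cases i <;> rfl
  · rw [Pi.basisFun_apply]; convert h₂ using 2 <;> ext i <;> fin_cases i <;> rfl

end LinearMap

namespace Z21

def mulₗ : (Fin 2 → ℂ) →ₗ[ℂ] (Fin 2 → ℂ) →ₗ[ℂ] Fin 2 → ℂ :=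
  LinearMap.mk₂ ℂ mulZ21
    (fun p p' q => by ext i; fin_cases i <;> simp [mulZ21, add_mul])
    (fun c p q => by ext i; fin_cases i <;> simp [mulZ21, mul_assoc])
    (fun p q q' => by ext i; fin_cases i <;> simp [mulZ21, mul_add])
    (fun c p q => by ext i; fin_cases i <;> simp [mulZ21, mul_left_comm])

@[simp]
theorem mulₗ_apply (p q : Fin 2 → ℂ) : mulₗ p q = mulZ21 p q := rfl

def shift : Module.End ℂ (Fin 2 → ℂ) where
  toFun v := ![0, v 0]
  map_add' u v := by ext i; fin_cases i <;> simp
  map_smul' c v := by ext i; fin_cases i <;> simp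

@[simp]
theorem shift_apply (v : Fin 2 → ℂ) : shift v = ![0, v 0] := rfl

theorem shift_mem_centroid : shift ∈ mulₗ.centroid := by
  intro p q
  constructor <;> ext i <;> fin_cases i <;> simp [mulZ21]

theorem eq_smul_one_add_smul_shift_iff {φ : Module.End ℂ (Fin 2 → ℂ)} {a b : ℂ} :
    φ = a • 1 + b • shift ↔
      φ ![1, 0] = a • ![1, 0] + b • ![0, 1] ∧ φ ![0, 1] = a • ![0, 1] := by
  constructor
  · rintro rfl
    constructor <;> ext i <;> fin_cases i <;> simp
  · rintro ⟨h₁, h₂⟩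
    refine LinearMap.ext_fin_two (h₁.trans ?_) (h₂.trans ?_) <;> ext i <;> fin_cases i <;> simp

theorem eq_of_mem_centroid {φ : Module.End ℂ (Fin 2 → ℂ)} (hφ : φ ∈ mulₗ.centroid) :
    φ = φ ![1, 0] 0 • 1 + φ ![1, 0] 1 • shift := by
  have hφe₂ : φ ![0, 1] = mulZ21 (φ ![1, 0]) ![1, 0] := by
    simpa [mulZ21] using (hφ ![1, 0] ![1, 0]).1
  refine eq_smul_one_add_smul_shift_iff.2 ⟨?_, ?_⟩
  · ext i; fin_cases i <;> simp
  · rw [hφe₂]; ext i; fin_cases i <;> simp [mulZ21]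

theorem centroid_eq_span : mulₗ.centroid = Submodule.span ℂ {1, shift} := by
  refine le_antisymm (fun φ hφ => ?_) ?_
  · exact Submodule.mem_span_pair.2 ⟨_, _, (eq_of_mem_centroid hφ).symm⟩
  · rw [Submodule.span_le, Set.insert_subset_iff, Set.singleton_subset_iff]
    exact ⟨mulₗ.one_mem_centroid, shift_mem_centroid⟩

theorem linearIndependent_one_shift : LinearIndependent ℂ ![1, shift] := by
  refine LinearIndependent.pair_iff.2 fun s t h => ?_
  have h₁ := congrArg (fun ψ : Module.End ℂ (Fin 2 → ℂ) => ψ ![1, 0]) h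
  simpa using h₁

end Z21

open Z21 in
/-- A linear map `φ` on `Z₂¹` belongs to the centroid `Γ(Z₂¹)` iff
`φ(e₁) = a e₁ + b e₂` and `φ(e₂) = a e₂` for some `a, b ∈ ℂ`; in particular
`Γ(Z₂¹)` is a 2-dimensional subspace of `End(Z₂¹)`. -/
theorem centroid_Z21 :
    (∀ φ : Module.End ℂ (Fin 2 → ℂ),
      (∀ p q : Fin 2 → ℂ,
        φ (mulZ21 p q) = mulZ21 (φ p) q ∧ φ (mulZ21 p q) = mulZ21 p (φ q)) ↔
      ∃ a b : ℂ, φ ![1, 0] = a • ![1, 0] + b • ![0, 1] ∧ φ ![0, 1] = a • ![0, 1]) ∧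
    ∃ S : Submodule ℂ (Module.End ℂ (Fin 2 → ℂ)),
      (∀ φ, φ ∈ S ↔ ∀ p q : Fin 2 → ℂ,
        φ (mulZ21 p q) = mulZ21 (φ p) q ∧ φ (mulZ21 p q) = mulZ21 p (φ q)) ∧
      Module.finrank ℂ S = 2 := by
  refine ⟨fun φ => ?_, mulₗ.centroid, fun φ => Iff.rfl, ?_⟩
  · change φ ∈ mulₗ.centroid ↔ _
    rw [centroid_eq_span, Submodule.mem_span_pair]
    exact exists₂_congr fun a b => eq_comm.trans eq_smul_one_add_smul_shift_iff
  · rw [centroid_eq_span, ← Matrix.range_cons_cons_empty 1 shift ![],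
      finrank_span_eq_card linearIndependent_one_shift, Fintype.card_fin]
end

section
/- Let Z₂¹ be the 2-dimensional complex Zinbiel algebra with basis (e₁, e₂) and e₁·e₁ = e₂ (all other products of basis elements zero). A linear map d : Z₂¹ → Z₂¹ is a quasi-derivation of Z₂¹ if and only if d(e₂) ∈ ℂe₂, i.e., if and only if the matrix of d in the basis (e₁, e₂) is lower triangular. In particular, QDer(Z₂¹) is a 3-dimensional subspace of End(Z₂¹). -/
/-!
The product `p·q` only sees the first coordinates `p 0`, `q 0`, and vanishes as soon as one
factor lies in `ℂe₂`. Testing the quasi-derivation identity on `(e₂, e₁)` forces `(d e₂) 0 = 0`.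
Conversely, if `(d e₂) 0 = 0` then `(d p) 0 = a · p 0` with `a = (d e₁) 0`, so
`d(p)·q + p·d(q) = 2a · (p·q)` and `d' = 2a · id` works. Hence `QDer(Z₂¹)` is the kernel of the
nonzero functional `d ↦ (d e₂) 0` on the 4-dimensional space `End(Z₂¹)`.
-/

def IsQuasiDerivation {R M : Type*} [CommSemiring R] [AddCommMonoid M] [Module R M]
    (mul : M → M → M) (d : Module.End R M) : Prop :=
  ∃ d' : Module.End R M, ∀ p q, mul (d p) q + mul p (d q) = d' (mul p q)

lemma apply_zero_eq_zero_iff_exists_eq_smul {R : Type*} [Semiring R] (v : Fin 2 → R) :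
    v 0 = 0 ↔ ∃ c : R, v = c • ![0, 1] := by
  constructor
  · intro h
    exact ⟨v 1, by ext i; fin_cases i <;> simp [h]⟩
  · rintro ⟨c, rfl⟩
    simp

lemma apply_zero_eq_mul_of_apply_e₂_zero_eq_zero {d : Module.End ℂ (Fin 2 → ℂ)}
    (h : d ![0, 1] 0 = 0) (p : Fin 2 → ℂ) : d p 0 = d ![1, 0] 0 * p 0 := by
  have hp : p = p 0 • ![1, 0] + p 1 • ![0, 1] := by
    ext i; fin_cases i <;> simp
  calc d p 0 = d (p 0 • ![1, 0] + p 1 • ![0, 1]) 0 := by rw [← hp]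
    _ = d ![1, 0] 0 * p 0 := by
      rw [map_add, map_smul, map_smul]
      simp [h, mul_comm]

lemma mulZ21_leibniz_of_apply_zero_eq_mul {d : Module.End ℂ (Fin 2 → ℂ)} {a : ℂ}
    (hd : ∀ p, d p 0 = a * p 0) (p q : Fin 2 → ℂ) :
    mulZ21 (d p) q + mulZ21 p (d q) = (2 * a) • mulZ21 p q := by
  ext i
  fin_cases i
  · simp [mulZ21]
  · simp only [mulZ21, hd, Fin.mk_one, Pi.add_apply, Pi.smul_apply, Matrix.cons_val_one,
      Matrix.cons_val_fin_one, smul_eq_mul]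
    ring

lemma isQuasiDerivation_mulZ21_iff (d : Module.End ℂ (Fin 2 → ℂ)) :
    IsQuasiDerivation mulZ21 d ↔ d ![0, 1] 0 = 0 := by
  constructor
  · rintro ⟨d', hd'⟩
    have h := congrFun (hd' ![0, 1] ![1, 0]) 1
    have hzero : mulZ21 ![0, 1] ![1, 0] = 0 := by
      ext i; fin_cases i <;> simp [mulZ21]
    rw [hzero, map_zero] at h
    simpa [mulZ21] using h
  · intro h
    exact ⟨(2 * d ![1, 0] 0) • LinearMap.id,
      mulZ21_leibniz_of_apply_zero_eq_mul (apply_zero_eq_mul_of_apply_e₂_zero_eq_zero h)⟩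

noncomputable def applyE₂Zero : Module.Dual ℂ (Module.End ℂ (Fin 2 → ℂ)) :=
  (LinearMap.proj 0).comp (LinearMap.applyₗ ![0, 1])

lemma applyE₂Zero_ne_zero : applyE₂Zero ≠ 0 := by
  intro h
  have := LinearMap.congr_fun h ((LinearMap.proj 1).smulRight ![1, 0])
  simp [applyE₂Zero] at this

lemma finrank_ker_applyE₂Zero : Module.finrank ℂ (LinearMap.ker applyE₂Zero) = 3 := by
  have h := Module.Dual.finrank_ker_add_one_of_ne_zero applyE₂Zero_ne_zero
  rw [Module.finrank_linearMap, Module.finrank_fin_fun] at h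
  omega

/-- A linear map `d` on `Z₂¹` is a quasi-derivation iff `d(e₂) ∈ ℂ e₂`
(equivalently, its matrix in the basis `(e₁, e₂)` is lower triangular);
in particular `QDer(Z₂¹)` is a 3-dimensional subspace of `End(Z₂¹)`. -/
theorem quasiDerivations_Z21 :
    (∀ d : Module.End ℂ (Fin 2 → ℂ),
      (∃ d' : Module.End ℂ (Fin 2 → ℂ), ∀ p q : Fin 2 → ℂ,
        mulZ21 (d p) q + mulZ21 p (d q) = d' (mulZ21 p q)) ↔
      ∃ c : ℂ, d ![0, 1] = c • ![0, 1]) ∧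
    ∃ S : Submodule ℂ (Module.End ℂ (Fin 2 → ℂ)),
      (∀ d, d ∈ S ↔ ∃ d' : Module.End ℂ (Fin 2 → ℂ), ∀ p q : Fin 2 → ℂ,
        mulZ21 (d p) q + mulZ21 p (d q) = d' (mulZ21 p q)) ∧
      Module.finrank ℂ S = 3 :=
  ⟨fun d => (isQuasiDerivation_mulZ21_iff d).trans (apply_zero_eq_zero_iff_exists_eq_smul _),
    LinearMap.ker applyE₂Zero, fun d => (isQuasiDerivation_mulZ21_iff d).symm,
    finrank_ker_applyE₂Zero⟩
end

section
/- Let Z₃³ be the 3-dimensional complex Zinbiel algebra with basis (e₁, e₂, e₃) and nonzero products e₁·e₁ = e₃ and e₂·e₂ = e₃ (all other products of basis elements zero). A linear map d : Z₃³ → Z₃³ is a derivation if and only if there exist a, b, c, f ∈ ℂ with d(e₁) = a e₁ + b e₂ + c e₃, d(e₂) = −b e₁ + a e₂ + f e₃, and d(e₃) = 2a e₃. In particular, Der(Z₃³) is 4-dimensional. -/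
/-!
Every product in `Z₃³` is the multiple `(p₁q₁ + p₂q₂) • e₃` of `e₃`. Evaluating the Leibniz rule
on pairs of basis vectors therefore forces `d e₃ = 2a e₃`, and forces `d` to act on `e₁, e₂` modulo
`e₃` as an infinitesimal similarity `a·id + b·J` of the form `p₁q₁ + p₂q₂` (`J e₁ = e₂`,
`J e₂ = -e₁`); by bilinearity these conditions also suffice. The four derivations with
`(a, b, c, f)` a unit vector are then linearly independent and span `Der(Z₃³)`.
-/

/-- The multiplication of the 3-dimensional complex Zinbiel algebra `Z₃³`:
`e₁·e₁ = e₃`, `e₂·e₂ = e₃`, all other products of basis elements zero. -/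
def mulZ33 (p q : Fin 3 → ℂ) : Fin 3 → ℂ := ![0, 0, p 0 * q 0 + p 1 * q 1]

local notation "e₁" => (![1, 0, 0] : Fin 3 → ℂ)
local notation "e₂" => (![0, 1, 0] : Fin 3 → ℂ)
local notation "e₃" => (![0, 0, 1] : Fin 3 → ℂ)

def IsDerivationZ33 (d : Module.End ℂ (Fin 3 → ℂ)) : Prop :=
  ∀ p q : Fin 3 → ℂ, d (mulZ33 p q) = mulZ33 (d p) q + mulZ33 p (d q)

lemma mulZ33_eq_smul (p q : Fin 3 → ℂ) : mulZ33 p q = (p 0 * q 0 + p 1 * q 1) • e₃ := by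
  ext i; fin_cases i <;> simp [mulZ33]

lemma eq_add_smul_basis (p : Fin 3 → ℂ) : p = p 0 • e₁ + p 1 • e₂ + p 2 • e₃ := by
  ext i; fin_cases i <;> simp

lemma End.apply_eq_add_smul_basis (d : Module.End ℂ (Fin 3 → ℂ)) (p : Fin 3 → ℂ) :
    d p = p 0 • d e₁ + p 1 • d e₂ + p 2 • d e₃ := by
  conv_lhs => rw [eq_add_smul_basis p]
  simp only [map_add, map_smul]

lemma End.ext_basis {d d' : Module.End ℂ (Fin 3 → ℂ)} (h₁ : d e₁ = d' e₁) (h₂ : d e₂ = d' e₂)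
    (h₃ : d e₃ = d' e₃) : d = d' :=
  LinearMap.ext fun p => by
    rw [End.apply_eq_add_smul_basis d, End.apply_eq_add_smul_basis d', h₁, h₂, h₃]

lemma IsDerivationZ33.exists_apply_basis {d : Module.End ℂ (Fin 3 → ℂ)} (hd : IsDerivationZ33 d) :
    ∃ a b c f : ℂ,
      d e₁ = a • e₁ + b • e₂ + c • e₃ ∧
      d e₂ = (-b) • e₁ + a • e₂ + f • e₃ ∧
      d e₃ = (2 * a) • e₃ := by
  have h₁₁ := congrFun (hd e₁ e₁) 2
  have h₁₂ := congrFun (hd e₁ e₂) 2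
  have h₂₂ := congrFun (hd e₂ e₂) 2
  have h₁₃ := congrFun (hd e₁ e₃) 2
  have h₂₃ := congrFun (hd e₂ e₃) 2
  simp only [mulZ33_eq_smul, Pi.add_apply, Pi.smul_apply, smul_eq_mul, Matrix.cons_val, mul_one,
    mul_zero, one_mul, zero_mul, add_zero, zero_add, map_smul] at h₁₁ h₁₂ h₂₂ h₁₃ h₂₃
  refine ⟨d e₁ 0, d e₁ 1, d e₁ 2, d e₂ 2, ?_, ?_, ?_⟩ <;> ext i <;> fin_cases i <;> simp
  · linear_combination -h₁₂
  · linear_combination (h₁₁ - h₂₂) / 2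
  · exact h₁₃.symm
  · exact h₂₃.symm
  · linear_combination h₁₁

lemma isDerivationZ33_of_apply_basis {d : Module.End ℂ (Fin 3 → ℂ)} {a b c f : ℂ}
    (h₁ : d e₁ = a • e₁ + b • e₂ + c • e₃) (h₂ : d e₂ = (-b) • e₁ + a • e₂ + f • e₃)
    (h₃ : d e₃ = (2 * a) • e₃) : IsDerivationZ33 d := by
  intro p q
  rw [mulZ33_eq_smul, mulZ33_eq_smul, mulZ33_eq_smul, map_smul, h₃, ← add_smul, smul_smul,
    End.apply_eq_add_smul_basis d p, End.apply_eq_add_smul_basis d q, h₁, h₂, h₃]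
  congr 1
  simp only [Pi.add_apply, Pi.smul_apply, Pi.neg_apply, neg_smul, smul_eq_mul, Matrix.cons_val,
    mul_one, mul_zero, add_zero, zero_add]
  ring

lemma isDerivationZ33_iff_exists_apply_basis (d : Module.End ℂ (Fin 3 → ℂ)) :
    IsDerivationZ33 d ↔ ∃ a b c f : ℂ,
      d e₁ = a • e₁ + b • e₂ + c • e₃ ∧
      d e₂ = (-b) • e₁ + a • e₂ + f • e₃ ∧
      d e₃ = (2 * a) • e₃ :=
  ⟨IsDerivationZ33.exists_apply_basis, fun ⟨_, _, _, _, h₁, h₂, h₃⟩ =>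
    isDerivationZ33_of_apply_basis h₁ h₂ h₃⟩

noncomputable def derivationBasis : Fin 4 → Module.End ℂ (Fin 3 → ℂ) :=
  ![Matrix.toLin' !![1, 0, 0; 0, 1, 0; 0, 0, 2], Matrix.toLin' !![0, -1, 0; 1, 0, 0; 0, 0, 0],
    Matrix.toLin' !![0, 0, 0; 0, 0, 0; 1, 0, 0], Matrix.toLin' !![0, 0, 0; 0, 0, 0; 0, 1, 0]]

lemma sum_smul_derivationBasis_apply (v : Fin 4 → ℂ) (p : Fin 3 → ℂ) :
    (∑ i, v i • derivationBasis i) p =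
      ![v 0 * p 0 - v 1 * p 1, v 1 * p 0 + v 0 * p 1, v 2 * p 0 + v 3 * p 1 + 2 * v 0 * p 2] := by
  ext i
  fin_cases i <;>
    simp [derivationBasis, Fin.sum_univ_four, Fin.sum_univ_three, Matrix.toLin'_apply, dotProduct] <;>
    ring

lemma sum_smul_derivationBasis_apply_basis (v : Fin 4 → ℂ) :
    (∑ i, v i • derivationBasis i) e₁ = v 0 • e₁ + v 1 • e₂ + v 2 • e₃ ∧
      (∑ i, v i • derivationBasis i) e₂ = (-v 1) • e₁ + v 0 • e₂ + v 3 • e₃ ∧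
      (∑ i, v i • derivationBasis i) e₃ = (2 * v 0) • e₃ := by
  simp only [sum_smul_derivationBasis_apply]
  refine ⟨?_, ?_, ?_⟩ <;> ext i <;> fin_cases i <;> simp

lemma linearIndependent_derivationBasis : LinearIndependent ℂ derivationBasis := by
  refine Fintype.linearIndependent_iff.mpr fun v hv => ?_
  obtain ⟨h₁, h₂, -⟩ := sum_smul_derivationBasis_apply_basis v
  rw [hv] at h₁ h₂
  intro i
  fin_cases i
  · simpa using (congrFun h₁ 0).symm
  · simpa using (congrFun h₁ 1).symm
  · simpa using (congrFun h₁ 2).symm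
  · simpa using (congrFun h₂ 2).symm

lemma isDerivationZ33_iff_mem_span (d : Module.End ℂ (Fin 3 → ℂ)) :
    IsDerivationZ33 d ↔ d ∈ Submodule.span ℂ (Set.range derivationBasis) := by
  rw [Submodule.mem_span_range_iff_exists_fun]
  constructor
  · intro hd
    obtain ⟨a, b, c, f, h₁, h₂, h₃⟩ := hd.exists_apply_basis
    obtain ⟨g₁, g₂, g₃⟩ := sum_smul_derivationBasis_apply_basis ![a, b, c, f]
    exact ⟨_, End.ext_basis (by simpa [h₁] using g₁) (by simpa [h₂] using g₂)
      (by simpa [h₃] using g₃)⟩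
  · rintro ⟨v, rfl⟩
    exact (isDerivationZ33_iff_exists_apply_basis _).mpr ⟨_, _, _, _,
      sum_smul_derivationBasis_apply_basis v⟩

/-- A linear map `d` on `Z₃³` is a derivation iff `d(e₁) = a e₁ + b e₂ + c e₃`,
`d(e₂) = -b e₁ + a e₂ + f e₃` and `d(e₃) = 2a e₃` for some `a, b, c, f ∈ ℂ`;
in particular `Der(Z₃³)` is 4-dimensional. -/
theorem derivations_Z33 :
    (∀ d : Module.End ℂ (Fin 3 → ℂ),
      (∀ p q : Fin 3 → ℂ, d (mulZ33 p q) = mulZ33 (d p) q + mulZ33 p (d q)) ↔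
      ∃ a b c f : ℂ,
        d ![1, 0, 0] = a • ![1, 0, 0] + b • ![0, 1, 0] + c • ![0, 0, 1] ∧
        d ![0, 1, 0] = (-b) • ![1, 0, 0] + a • ![0, 1, 0] + f • ![0, 0, 1] ∧
        d ![0, 0, 1] = (2 * a) • ![0, 0, 1]) ∧
    ∃ S : Submodule ℂ (Module.End ℂ (Fin 3 → ℂ)),
      (∀ d, d ∈ S ↔ ∀ p q : Fin 3 → ℂ, d (mulZ33 p q) = mulZ33 (d p) q + mulZ33 p (d q)) ∧
      Module.finrank ℂ S = 4 := by
  refine ⟨isDerivationZ33_iff_exists_apply_basis, _,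
    fun d => (isDerivationZ33_iff_mem_span d).symm, ?_⟩
  rw [finrank_span_eq_card linearIndependent_derivationBasis, Fintype.card_fin]
end
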